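/- Let Ω ⊂ ℝⁿ be a bounded domain with high ridge R_Ω and inradius r_Ω. For every probability measure μ on the closure of Ω, J_*^∞(μ) := sup{∫ u dμ : u ∈ Lip_0(Ω), Lip(u) ≤ 1} ≤ r_Ω, with equality if supp(μ) ⊆ R_Ω. Consequently, the probability measures supported on R_Ω are exactly the maximizers of J_*^∞ over probability measures (equivalently, the minimizers of the dual Rayleigh quotient |μ|(Ω)/J_*^∞(μ)). -/

import Mathlib

/-!
Every 1-Lipschitz `u` vanishing on `∂Ω` lies below `d = dist(·, ∂Ω)`, which is itself admissible,
so `J_*^∞(μ) = ∫ d dμ`. Since `d ≤ r_Ω` on `closure Ω`, this is at most `r_Ω`, with equality iff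
`d = r_Ω` holds `μ`-a.e., i.e. iff `μ` is carried by the ridge (`d` vanishes on `∂Ω` and `r_Ω > 0`).
-/

open MeasureTheory Metric Set Filter

theorem Continuous.integrable_of_ae_mem_isCompact {Y : Type*} [TopologicalSpace Y] [T2Space Y]
    [MeasurableSpace Y] [OpensMeasurableSpace Y] {μ : Measure Y} [IsFiniteMeasureOnCompacts μ]
    {K : Set Y} (hK : IsCompact K) (hμK : ∀ᵐ x ∂μ, x ∈ K) {f : Y → ℝ} (hf : Continuous f) :
    Integrable f μ := by
  simpa only [IntegrableOn, Measure.restrict_eq_self_of_ae_mem hμK]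
    using hf.continuousOn.integrableOn_compact (μ := μ) hK

theorem integral_eq_const_iff_of_ae_le {α : Type*} [MeasurableSpace α] {μ : Measure α}
    [IsProbabilityMeasure μ] {f : α → ℝ} {c : ℝ} (hf : Integrable f μ) (hfc : ∀ᵐ x ∂μ, f x ≤ c) :
    ∫ x, f x ∂μ = c ↔ ∀ᵐ x ∂μ, f x = c := by
  have := integral_eq_iff_of_ae_le hf (integrable_const c) hfc
  rwa [integral_const, probReal_univ, one_smul] at this

section InfDist

variable {X : Type*} [PseudoMetricSpace X]

/-- `J_*^∞(μ)` is the supremum of this set (with `F = ∂Ω`). -/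
def lipZeroIntegrals [MeasurableSpace X] (F : Set X) (μ : Measure X) : Set ℝ :=
  {r | ∃ u : X → ℝ, LipschitzWith 1 u ∧ (∀ x ∈ F, u x = 0) ∧ r = ∫ x, u x ∂μ}

theorem LipschitzWith.le_infDist_of_eq_zero {u : X → ℝ} (hu : LipschitzWith 1 u) {F : Set X}
    (hF : F.Nonempty) (hu0 : ∀ y ∈ F, u y = 0) (x : X) : u x ≤ infDist x F := by
  refine (le_infDist hF).2 fun y hy => ?_
  have := hu.dist_le_mul x y
  rw [Real.dist_eq, hu0 y hy, sub_zero, NNReal.coe_one, one_mul] at this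
  exact (le_abs_self _).trans this

theorem isGreatest_lipZeroIntegrals [MeasurableSpace X] {μ : Measure X} {F : Set X}
    (hF : F.Nonempty) (hint : ∀ u : X → ℝ, LipschitzWith 1 u → Integrable u μ) :
    IsGreatest (lipZeroIntegrals F μ) (∫ x, infDist x F ∂μ) := by
  have hd : LipschitzWith 1 (infDist · F) := lipschitz_infDist_pt F
  refine ⟨⟨_, hd, fun x hx => infDist_zero_of_mem hx, rfl⟩, ?_⟩
  rintro _ ⟨u, hu, hu0, rfl⟩
  exact integral_mono (hint u hu) (hint _ hd) (hu.le_infDist_of_eq_zero hF hu0)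

theorem lipZeroIntegrals_empty [MeasurableSpace X] (μ : Measure X) [IsProbabilityMeasure μ] :
    lipZeroIntegrals (∅ : Set X) μ = univ :=
  eq_univ_of_forall fun r =>
    ⟨fun _ => r, (LipschitzWith.const r).weaken bot_le, fun _ h => h.elim, by simp⟩

theorem IsOpen.infDist_frontier_pos {Ω : Set X} (hΩ : IsOpen Ω) (hF : (frontier Ω).Nonempty)
    {x : X} (hx : x ∈ Ω) : 0 < infDist x (frontier Ω) :=
  (isClosed_frontier.notMem_iff_infDist_pos hF).1 fun h => (hΩ.frontier_eq ▸ h).2 hx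

theorem mem_or_infDist_frontier_eq_zero {Ω : Set X} {x : X} (hx : x ∈ closure Ω) :
    x ∈ Ω ∨ infDist x (frontier Ω) = 0 := by
  rw [closure_eq_self_union_frontier] at hx
  exact hx.imp_right infDist_zero_of_mem

end InfDist

theorem dual_rayleigh_minimizers_general
    {n : ℕ} (Ω : Set (EuclideanSpace ℝ (Fin n)))
    (hΩo : IsOpen Ω) (hΩb : Bornology.IsBounded Ω)
    (rΩ : ℝ) (hrub : ∀ x ∈ Ω, infDist x (frontier Ω) ≤ rΩ)
    (R : Set (EuclideanSpace ℝ (Fin n)))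
    (hR : R = {x ∈ Ω | infDist x (frontier Ω) = rΩ})
    (hRne : R.Nonempty)
    (μ : Measure (EuclideanSpace ℝ (Fin n))) [IsProbabilityMeasure μ]
    (hμ : μ (closure Ω)ᶜ = 0) :
    sSup {r : ℝ | ∃ u : EuclideanSpace ℝ (Fin n) → ℝ, LipschitzWith 1 u ∧
        (∀ x ∈ frontier Ω, u x = 0) ∧ r = ∫ x, u x ∂μ} ≤ rΩ ∧
    (sSup {r : ℝ | ∃ u : EuclideanSpace ℝ (Fin n) → ℝ, LipschitzWith 1 u ∧
        (∀ x ∈ frontier Ω, u x = 0) ∧ r = ∫ x, u x ∂μ} = rΩ ↔ μ Rᶜ = 0) := by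
  change sSup (lipZeroIntegrals (frontier Ω) μ) ≤ rΩ ∧
    (sSup (lipZeroIntegrals (frontier Ω) μ) = rΩ ↔ μ Rᶜ = 0)
  obtain ⟨x₀, hx₀Ω, hx₀⟩ := hR ▸ hRne
  rcases (frontier Ω).eq_empty_or_nonempty with hF | hF
  · -- With `∂Ω = ∅` every constant is admissible: the supremum is the junk value `sSup univ = 0`.
    have hr : rΩ = 0 := by rw [← hx₀, hF, infDist_empty]
    have hRΩ : R = closure Ω := by
      simp [hR, closure_eq_self_union_frontier Ω, hF, hr, infDist_empty]
    rw [hF, lipZeroIntegrals_empty, Real.sSup_univ, hr, hRΩ]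
    exact ⟨le_rfl, iff_of_true rfl hμ⟩
  have hμΩ : ∀ᵐ x ∂μ, x ∈ closure Ω := mem_ae_iff.2 hμ
  have hint (u : EuclideanSpace ℝ (Fin n) → ℝ) (hu : LipschitzWith 1 u) : Integrable u μ :=
    hu.continuous.integrable_of_ae_mem_isCompact hΩb.isCompact_closure hμΩ
  have hdint : Integrable (infDist · (frontier Ω)) μ := hint _ (lipschitz_infDist_pt _)
  have hr : 0 < rΩ := hx₀ ▸ hΩo.infDist_frontier_pos hF hx₀Ω
  have hle : ∀ᵐ x ∂μ, infDist x (frontier Ω) ≤ rΩ := hμΩ.mono fun x hx =>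
    (mem_or_infDist_frontier_eq_zero hx).elim (hrub x) fun h => h ▸ hr.le
  have hridge : ∀ᵐ x ∂μ, infDist x (frontier Ω) = rΩ ↔ x ∈ R := hμΩ.mono fun x hx => by
    rw [hR]
    refine ⟨fun h => ⟨?_, h⟩, And.right⟩
    exact (mem_or_infDist_frontier_eq_zero hx).resolve_right (h ▸ hr.ne')
  rw [(isGreatest_lipZeroIntegrals hF hint).csSup_eq,
    integral_eq_const_iff_of_ae_le hdint hle, eventually_congr hridge]
  exact ⟨by simpa using integral_mono_ae hdint (integrable_const rΩ) hle, mem_ae_iff⟩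

/-- For probability measures `μ` on the closure of `Ω`,
`J_*^∞(μ) = sup{∫ u dμ : u ∈ Lip_0(Ω), Lip(u) ≤ 1} ≤ r_Ω`, with equality exactly when
`μ` is supported on the high ridge `R_Ω`; i.e., the measures supported on `R_Ω` are
exactly the maximizers of `J_*^∞` (minimizers of the dual Rayleigh quotient). -/
theorem dual_rayleigh_minimizers
    {n : ℕ} (Ω : Set (EuclideanSpace ℝ (Fin n)))
    (hΩo : IsOpen Ω) (hΩb : Bornology.IsBounded Ω) (hΩne : Ω.Nonempty)
    (rΩ : ℝ) (hrub : ∀ x ∈ Ω, infDist x (frontier Ω) ≤ rΩ)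
    (R : Set (EuclideanSpace ℝ (Fin n)))
    (hR : R = {x ∈ Ω | infDist x (frontier Ω) = rΩ})
    (hRne : R.Nonempty)
    (μ : Measure (EuclideanSpace ℝ (Fin n))) [IsProbabilityMeasure μ]
    (hμ : μ (closure Ω)ᶜ = 0) :
    sSup {r : ℝ | ∃ u : EuclideanSpace ℝ (Fin n) → ℝ, LipschitzWith 1 u ∧
        (∀ x ∈ frontier Ω, u x = 0) ∧ r = ∫ x, u x ∂μ} ≤ rΩ ∧
    (sSup {r : ℝ | ∃ u : EuclideanSpace ℝ (Fin n) → ℝ, LipschitzWith 1 u ∧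
        (∀ x ∈ frontier Ω, u x = 0) ∧ r = ∫ x, u x ∂μ} = rΩ ↔ μ Rᶜ = 0) :=
  dual_rayleigh_minimizers_general Ω hΩo hΩb rΩ hrub R hR hRne μ hμ
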